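/- Let X and Y be random variables with distributions F and G, F supported on ℝ, G(0−)=0, G(0)<1. Assume P[XY > x] ~ ∫₀^∞ h(y) F̄(x/y) G(dy) as x → ∞ for some bounded h : [0,∞) → (0,∞) with E[h(Y)] = 1, and that there is a(x) → ∞ with a(x)/x → 0 and Ḡ(a(x)) = o(H̄(x)). If F has dominatedly varying tail, then the product distribution H(x) = P[XY ≤ x] has dominatedly varying tail. -/

import Mathlib

/-!
Write `I x = ∫_{y > 0} h(y) F̄(x/y) G(dy)`, so that `H̄ ~ I`. Split `I (b x)` at `y = a(x)`:
for `y ≤ a(x)` the argument `x / y ≥ x / a(x)` is large, so dominated variation of `F̄` gives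
`F̄(b x / y) ≤ C F̄(x / y)`; the part `y > a(x)` is at most `K Ḡ(a(x)) = o(H̄(x))`. Hence
`I (b x) = O(I x)`, and dominated variation passes from `I` to the equivalent `H̄`.
-/

open Filter MeasureTheory Asymptotics Topology ProbabilityTheory

noncomputable def rtail {Ω : Type*} [MeasureSpace Ω] (Z : Ω → ℝ) (x : ℝ) : ℝ :=
  (ℙ {ω | x < Z ω}).toReal

def DomVar (T : ℝ → ℝ) : Prop :=
  ∀ b ∈ Set.Ioo (0:ℝ) 1, (fun x => T (b * x)) =O[atTop] T

section rtail

variable {Ω : Type*} [MeasureSpace Ω]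

lemma rtail_nonneg (Z : Ω → ℝ) (x : ℝ) : 0 ≤ rtail Z x := ENNReal.toReal_nonneg

lemma map_real_Ioi_eq_rtail {Z : Ω → ℝ} (hZ : Measurable Z) (t : ℝ) :
    (Measure.map Z ℙ).real (Set.Ioi t) = rtail Z t := by
  rw [measureReal_def, Measure.map_apply hZ measurableSet_Ioi]
  rfl

variable [IsProbabilityMeasure (ℙ : Measure Ω)]

lemma rtail_le_one (Z : Ω → ℝ) (x : ℝ) : rtail Z x ≤ 1 :=
  ENNReal.toReal_le_of_le_ofReal zero_le_one (by simpa using prob_le_one)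

lemma rtail_antitone (Z : Ω → ℝ) : Antitone (rtail Z) := fun _ _ hst =>
  ENNReal.toReal_mono (measure_ne_top _ _) (measure_mono fun _ hω => lt_of_le_of_lt hst hω)

end rtail

lemma DomVar.of_isTheta {S T : ℝ → ℝ} (hT : DomVar T) (hST : S =Θ[atTop] T) : DomVar S :=
  fun b hb => ((hST.isBigO.comp_tendsto (tendsto_id.const_mul_atTop hb.1)).trans
    (hT b hb)).trans hST.isBigO_symm

lemma DomVar.exists_pos_bound {F : ℝ → ℝ} (hD : DomVar F) (hF : ∀ t, 0 ≤ F t) {b : ℝ}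
    (hb : b ∈ Set.Ioo (0:ℝ) 1) : ∃ C, 0 < C ∧ ∃ T, ∀ t ≥ T, F (b * t) ≤ C * F t := by
  obtain ⟨C, hC, hCO⟩ := (hD b hb).exists_pos
  obtain ⟨T, hT⟩ := eventually_atTop.mp hCO.bound
  refine ⟨C, hC, T, fun t ht => ?_⟩
  simpa only [Real.norm_of_nonneg (hF _)] using hT t ht

lemma tendsto_div_atTop_of_tendsto_div_zero {a : ℝ → ℝ} (ha : ∀ᶠ x in atTop, 0 < a x)
    (ha0 : Tendsto (fun x => a x / x) atTop (𝓝 0)) :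
    Tendsto (fun x => x / a x) atTop atTop := by
  have hpos : ∀ᶠ x in atTop, 0 < a x / x := by
    filter_upwards [ha, eventually_gt_atTop 0] with x hax hx using div_pos hax hx
  exact (tendsto_nhdsWithin_of_tendsto_nhds_of_eventually_within _ ha0 hpos).inv_tendsto_nhdsGT_zero
    |>.congr fun x => inv_div _ _

/-- With `F = F̄` and `μ = G` this is the right-hand side of the product representation
`P[XY > x] ~ ∫ h(y) F̄(x/y) G(dy)`. -/
noncomputable def mixtureTail (μ : Measure ℝ) (h F : ℝ → ℝ) (x : ℝ) : ℝ :=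
  ∫ y in Set.Ioi 0, h y * F (x / y) ∂μ

section mixtureTail

variable {μ : Measure ℝ} {h F : ℝ → ℝ} {K : ℝ}
  (hh : Measurable h) (hh0 : ∀ y, 0 ≤ h y) (hhK : ∀ y, h y ≤ K)
  (hF : Measurable F) (hF0 : ∀ t, 0 ≤ F t) (hF1 : ∀ t, F t ≤ 1)

include hh0 hhK hF0 hF1 in
lemma mul_comp_div_le_bound (x y : ℝ) : h y * F (x / y) ≤ K :=
  (mul_le_mul (hhK y) (hF1 _) (hF0 _) ((hh0 y).trans (hhK y))).trans_eq (mul_one K)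

include hh0 hF0 in
lemma mixtureTail_nonneg (x : ℝ) : 0 ≤ mixtureTail μ h F x :=
  setIntegral_nonneg measurableSet_Ioi fun y _ => mul_nonneg (hh0 y) (hF0 _)

variable [IsFiniteMeasure μ]

include hh hh0 hhK hF hF0 hF1 in
lemma integrable_mul_comp_div (x : ℝ) : Integrable (fun y => h y * F (x / y)) μ := by
  refine Integrable.mono' (integrable_const K)
    (hh.mul (hF.comp (measurable_const.div measurable_id))).aestronglyMeasurable ?_
  filter_upwards with y
  rw [Real.norm_of_nonneg (mul_nonneg (hh0 y) (hF0 _))]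
  exact mul_comp_div_le_bound hh0 hhK hF0 hF1 x y

include hh hh0 hhK hF hF0 hF1 in
lemma mixtureTail_mul_le {b C T x a : ℝ} (hC : 0 ≤ C) (hCT : ∀ t ≥ T, F (b * t) ≤ C * F t)
    (hx : 0 ≤ x) (ha : 0 ≤ a) (hTa : T ≤ x / a) :
    mixtureTail μ h F (b * x) ≤ C * mixtureTail μ h F x + K * μ.real (Set.Ioi a) := by
  have hint : ∀ z s, IntegrableOn (fun y => h y * F (z / y)) s μ := fun z _ =>
    (integrable_mul_comp_div hh hh0 hhK hF hF0 hF1 z).integrableOn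
  have hnear : ∫ y in Set.Ioc 0 a, h y * F (b * x / y) ∂μ ≤ C * mixtureTail μ h F x :=
    calc ∫ y in Set.Ioc 0 a, h y * F (b * x / y) ∂μ
        ≤ ∫ y in Set.Ioc 0 a, C * (h y * F (x / y)) ∂μ := by
          refine setIntegral_mono_on (hint _ _) ((hint x _).const_mul C) measurableSet_Ioc
            fun y hy => ?_
          have hxy : T ≤ x / y := hTa.trans (div_le_div_of_nonneg_left hx hy.1 hy.2)
          rw [mul_div_assoc, mul_left_comm]
          exact mul_le_mul_of_nonneg_left (hCT _ hxy) (hh0 y)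
      _ = C * ∫ y in Set.Ioc 0 a, h y * F (x / y) ∂μ := integral_const_mul _ _
      _ ≤ C * mixtureTail μ h F x := by
          refine mul_le_mul_of_nonneg_left (setIntegral_mono_set (hint x _) ?_
            (.of_forall Set.Ioc_subset_Ioi_self)) hC
          exact .of_forall fun y => mul_nonneg (hh0 y) (hF0 _)
  have hfar : ∫ y in Set.Ioi a, h y * F (b * x / y) ∂μ ≤ K * μ.real (Set.Ioi a) := by
    calc ∫ y in Set.Ioi a, h y * F (b * x / y) ∂μ ≤ ∫ _ in Set.Ioi a, K ∂μ :=
          setIntegral_mono_on (hint _ _) (integrableOn_const (measure_ne_top _ _))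
            measurableSet_Ioi fun y _ => mul_comp_div_le_bound hh0 hhK hF0 hF1 _ y
      _ = K * μ.real (Set.Ioi a) := by rw [setIntegral_const, smul_eq_mul, mul_comm]
  calc mixtureTail μ h F (b * x)
      = (∫ y in Set.Ioc 0 a, h y * F (b * x / y) ∂μ)
          + ∫ y in Set.Ioi a, h y * F (b * x / y) ∂μ := by
        rw [mixtureTail, ← Set.Ioc_union_Ioi_eq_Ioi ha,
          setIntegral_union (Set.Ioc_disjoint_Ioi le_rfl) measurableSet_Ioi (hint _ _) (hint _ _)]
    _ ≤ _ := add_le_add hnear hfar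

include hh hh0 hhK hF hF0 hF1 in
theorem domVar_mixtureTail (hD : DomVar F) {a : ℝ → ℝ} (ha : Tendsto a atTop atTop)
    (ha0 : Tendsto (fun x => a x / x) atTop (𝓝 0))
    (hfar : (fun x => μ.real (Set.Ioi (a x))) =O[atTop] mixtureTail μ h F) :
    DomVar (mixtureTail μ h F) := by
  intro b hb
  obtain ⟨C, hC, T, hCT⟩ := hD.exists_pos_bound hF0 hb
  have hbound : (fun x => mixtureTail μ h F (b * x)) =O[atTop]
      fun x => C * mixtureTail μ h F x + K * μ.real (Set.Ioi (a x)) := by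
    refine IsBigO.of_bound' ?_
    filter_upwards [ha.eventually_ge_atTop 0, eventually_ge_atTop 0,
      (tendsto_div_atTop_of_tendsto_div_zero (ha.eventually_gt_atTop 0) ha0).eventually_ge_atTop T]
      with x hax hx hTx
    rw [Real.norm_of_nonneg (mixtureTail_nonneg hh0 hF0 _)]
    exact (mixtureTail_mul_le hh hh0 hhK hF hF0 hF1 hC.le hCT hx hax hTx).trans (le_abs_self _)
  exact hbound.trans (((isBigO_refl _ _).const_mul_left C).add (hfar.const_mul_left K))

end mixtureTail

theorem stmt5_general {Ω : Type*} [MeasureSpace Ω] [IsProbabilityMeasure (ℙ : Measure Ω)]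
    (X Y : Ω → ℝ) (hY : Measurable Y)
    (h : ℝ → ℝ) (K : ℝ) (hmeas : Measurable h)
    (hhpos : ∀ y, 0 < h y) (hbdd : ∀ y, h y ≤ K)
    (hprod : Tendsto (fun x => rtail (fun ω => X ω * Y ω) x /
        ∫ y in Set.Ioi (0:ℝ), h y * rtail X (x / y) ∂(Measure.map Y ℙ)) atTop (𝓝 1))
    (a : ℝ → ℝ) (ha1 : Tendsto a atTop atTop)
    (ha2 : Tendsto (fun x => a x / x) atTop (𝓝 0))
    (ha3 : (fun x => rtail Y (a x)) =o[atTop] rtail (fun ω => X ω * Y ω))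
    (hD : DomVar (rtail X)) :
    DomVar (rtail (fun ω => X ω * Y ω)) := by
  have := Measure.isProbabilityMeasure_map (μ := (ℙ : Measure Ω)) hY.aemeasurable
  have hequiv : rtail (fun ω => X ω * Y ω) =Θ[atTop] mixtureTail (Measure.map Y ℙ) h (rtail X) :=
    (isEquivalent_of_tendsto_one hprod).isTheta
  have hfar : (fun x => (Measure.map Y ℙ).real (Set.Ioi (a x))) =O[atTop]
      mixtureTail (Measure.map Y ℙ) h (rtail X) := by
    simpa only [map_real_Ioi_eq_rtail hY] using ha3.isBigO.trans hequiv.isBigO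
  exact (domVar_mixtureTail hmeas (fun y => (hhpos y).le) hbdd (rtail_antitone X).measurable
    (rtail_nonneg X) (rtail_le_one X) hD ha1 ha2 hfar).of_isTheta hequiv

/-- under the weak-dependence product representation and the truncation
condition, dominated variation of `F` transfers to the product distribution `H`. -/
theorem stmt5 {Ω : Type*} [MeasureSpace Ω] [IsProbabilityMeasure (ℙ : Measure Ω)]
    (X Y : Ω → ℝ) (hY : Measurable Y)
    (hFpos : ∀ x : ℝ, 0 < rtail X x)
    (hGneg : ℙ {ω | Y ω < 0} = 0) (hG0 : ℙ {ω | Y ω ≤ 0} < 1)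
    (h : ℝ → ℝ) (K : ℝ) (hmeas : Measurable h)
    (hhpos : ∀ y, 0 < h y) (hbdd : ∀ y, h y ≤ K)
    (hmean : ∫ y, h y ∂(Measure.map Y ℙ) = 1)
    (hprod : Tendsto (fun x => rtail (fun ω => X ω * Y ω) x /
        ∫ y in Set.Ioi (0:ℝ), h y * rtail X (x / y) ∂(Measure.map Y ℙ)) atTop (𝓝 1))
    (a : ℝ → ℝ) (ha1 : Tendsto a atTop atTop)
    (ha2 : Tendsto (fun x => a x / x) atTop (𝓝 0))
    (ha3 : (fun x => rtail Y (a x)) =o[atTop] rtail (fun ω => X ω * Y ω))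
    (hD : DomVar (rtail X)) :
    DomVar (rtail (fun ω => X ω * Y ω)) :=
  stmt5_general X Y hY h K hmeas hhpos hbdd hprod a ha1 ha2 ha3 hD
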